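/- Let μ be a probability measure on X satisfying the log-Sobolev inequality with constant D > 0, and let M > 0 be such that for every i ∈ ℤ the pushforward μ^{(i)} of μ under the spin flip at site i is absolutely continuous with respect to μ with ‖dμ^{(i)}/dμ‖_{L^∞(μ)} ≤ M. Then for every local continuous f : X → ℝ and every λ ∈ [0,1], λ·∫ f·e^{λf} dμ − (∫ e^{λf} dμ)·log(∫ e^{λf} dμ) ≤ (D(M+1)/2)·‖δ(f)‖₂²·λ²·∫ e^{λf} dμ. -/

import Mathlib

/-!
Apply the log-Sobolev inequality to `g = exp (λ f / 2)`: then `g² = exp (λ f)` and `Ent_μ(g²)`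
is exactly the left-hand side. Each flip term is controlled by the elementary bound
`(e^{a/2} - e^{b/2})² ≤ (a - b)²/4 · (e^a + e^b)` with `|a - b| ≤ λ δ_i f`, and the integral of
the flipped weight `exp (λ f ∘ 𝔖_i)` is at most `M ∫ exp (λ f) dμ` by the density bound.
-/

open MeasureTheory Real

noncomputable section

/-- The configuration space `X = {-1,+1}^ℤ`, with spins encoded by booleans. -/
abbrev Config : Type := ℤ → Bool

/-- The real value of a spin: `true ↦ +1`, `false ↦ -1`. -/
def spin (b : Bool) : ℝ := if b then 1 else -1

def flipAt (i : ℤ) (ω : Config) : Config := fun j => if j = i then !(ω j) else ω j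

def IsLocal (F : Config → ℝ) : Prop :=
  ∃ S : Finset ℤ, ∀ ω η : Config, (∀ i ∈ S, ω i = η i) → F ω = F η

/-- The oscillation `δ_k F` at site `k`. -/
def osc (F : Config → ℝ) (k : ℤ) : ℝ :=
  sSup {d : ℝ | ∃ ξ η : Config, (∀ j : ℤ, j ≠ k → ξ j = η j) ∧ d = F ξ - F η}

/-- The total squared oscillation `‖δ(F)‖₂²`. -/
def oscSq (F : Config → ℝ) : ℝ := ∑' k : ℤ, (osc F k) ^ 2

/-- The Gaussian Concentration Bound with constant `D`. -/
def GCB (μ : Measure Config) (D : ℝ) : Prop :=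
  ∀ F : Config → ℝ, IsLocal F → Continuous F →
    (∫ ω, exp (F ω - ∫ η, F η ∂μ) ∂μ) ≤ exp (D * oscSq F)

/-- The entropy functional `Ent_μ(g)`. -/
def entropy (μ : Measure Config) (g : Config → ℝ) : ℝ :=
  (∫ ω, g ω * log (g ω) ∂μ) - (∫ ω, g ω ∂μ) * log (∫ ω, g ω ∂μ)

def SatisfiesLSI (μ : Measure Config) (D : ℝ) : Prop :=
  ∀ f : Config → ℝ, IsLocal f → Continuous f →
    entropy μ (fun ω => (f ω) ^ 2) ≤ 2 * D * ∫ ω, ∑' i : ℤ, (f ω - f (flipAt i ω)) ^ 2 ∂μ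

theorem Real.sq_exp_half_sub_exp_half_le (a b : ℝ) :
    (exp (a / 2) - exp (b / 2)) ^ 2 ≤ (a - b) ^ 2 / 4 * (exp a + exp b) := by
  wlog hba : b ≤ a generalizing a b
  · calc (exp (a / 2) - exp (b / 2)) ^ 2 = (exp (b / 2) - exp (a / 2)) ^ 2 := by ring
      _ ≤ (b - a) ^ 2 / 4 * (exp b + exp a) := this b a (le_of_not_ge hba)
      _ = (a - b) ^ 2 / 4 * (exp a + exp b) := by ring
  have hsub : exp (a / 2) - exp (b / 2) ≤ (a - b) / 2 * exp (a / 2) := by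
    have h := mul_le_mul_of_nonneg_left (add_one_le_exp ((b - a) / 2)) (exp_pos (a / 2)).le
    rw [← exp_add, show a / 2 + (b - a) / 2 = b / 2 by ring] at h
    linarith
  have hnonneg : 0 ≤ exp (a / 2) - exp (b / 2) := sub_nonneg.2 (exp_le_exp.2 (by linarith))
  calc (exp (a / 2) - exp (b / 2)) ^ 2 ≤ ((a - b) / 2 * exp (a / 2)) ^ 2 :=
        pow_le_pow_left₀ hnonneg hsub 2
    _ = (a - b) ^ 2 / 4 * exp a := by
        rw [mul_pow, sq (exp _), ← exp_add, add_halves]; ring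
    _ ≤ (a - b) ^ 2 / 4 * (exp a + exp b) := by gcongr; linarith [exp_pos b]

theorem integral_comp_le_mul_integral_of_rnDeriv_le {α : Type*} [MeasurableSpace α]
    {μ : Measure α} [IsFiniteMeasure μ] {φ : α → α} (hφ : Measurable φ)
    (hac : μ.map φ ≪ μ) {M : ℝ} (hM : 0 ≤ M)
    (hdens : ∀ᵐ x ∂μ, (μ.map φ).rnDeriv μ x ≤ ENNReal.ofReal M)
    {g : α → ℝ} (hg : StronglyMeasurable g) (hg0 : 0 ≤ g) (hgi : Integrable g μ) :
    ∫ x, g (φ x) ∂μ ≤ M * ∫ x, g x ∂μ := by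
  rw [← integral_map hφ.aemeasurable hg.aestronglyMeasurable, ← integral_rnDeriv_smul hac,
    ← integral_const_mul]
  refine integral_mono_of_nonneg (.of_forall fun x => smul_nonneg ENNReal.toReal_nonneg (hg0 x))
    (hgi.const_mul M) ?_
  filter_upwards [hdens] with x hx
  have hx' : ((μ.map φ).rnDeriv μ x).toReal ≤ M := ENNReal.toReal_le_of_le_ofReal hM hx
  exact mul_le_mul_of_nonneg_right hx' (hg0 x)

theorem Continuous.integrable_of_compactSpace {X : Type*} [TopologicalSpace X] [CompactSpace X]
    [MeasurableSpace X] [OpensMeasurableSpace X] {μ : Measure X} [IsFiniteMeasure μ]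
    {E : Type*} [NormedAddCommGroup E] {F : X → E} (hF : Continuous F) : Integrable F μ :=
  hF.integrable_of_hasCompactSupport (.of_compactSpace F)

@[fun_prop]
theorem continuous_flipAt (i : ℤ) : Continuous (flipAt i) := by
  refine continuous_pi fun j => ?_
  by_cases h : j = i
  · simp only [flipAt, h, if_true]
    exact (continuous_of_discreteTopology (f := not)).comp (continuous_apply i)
  · simpa only [flipAt, h, if_false] using continuous_apply j

theorem flipAt_apply_of_ne {i j : ℤ} (ω : Config) (h : j ≠ i) : flipAt i ω j = ω j := by
  simp [flipAt, h]

theorem abs_sub_le_osc {F : Config → ℝ} (hF : Continuous F) {k : ℤ} {ξ η : Config}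
    (h : ∀ j, j ≠ k → ξ j = η j) : |F ξ - F η| ≤ osc F k := by
  obtain ⟨A, hA⟩ := (isCompact_range hF).bddAbove
  obtain ⟨B, hB⟩ := (isCompact_range hF).bddBelow
  have hbdd :
      BddAbove {d : ℝ | ∃ ξ η : Config, (∀ j, j ≠ k → ξ j = η j) ∧ d = F ξ - F η} := by
    refine ⟨A - B, ?_⟩
    rintro d ⟨ξ, η, -, rfl⟩
    linarith [hA (Set.mem_range_self ξ), hB (Set.mem_range_self η)]
  exact abs_sub_le_iff.2 ⟨le_csSup hbdd ⟨ξ, η, h, rfl⟩,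
    le_csSup hbdd ⟨η, ξ, fun j hj => (h j hj).symm, rfl⟩⟩

theorem abs_sub_flipAt_le_osc {F : Config → ℝ} (hF : Continuous F) (k : ℤ) (ω : Config) :
    |F ω - F (flipAt k ω)| ≤ osc F k :=
  abs_sub_le_osc hF fun _ hj => (flipAt_apply_of_ne ω hj).symm

section DependsOn

variable {F : Config → ℝ} {s : Set ℤ} {k : ℤ}

theorem DependsOn.eq_of_eqOn_compl_singleton (hF : DependsOn F s) (hk : k ∉ s) {ξ η : Config}
    (h : ∀ j, j ≠ k → ξ j = η j) : F ξ = F η :=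
  hF fun i hi => h i (ne_of_mem_of_not_mem hi hk)

theorem DependsOn.comp_flipAt (hF : DependsOn F s) (hk : k ∉ s) (ω : Config) :
    F (flipAt k ω) = F ω :=
  hF.eq_of_eqOn_compl_singleton hk fun _ hj => flipAt_apply_of_ne ω hj

theorem DependsOn.osc_eq_zero (hF : DependsOn F s) (hk : k ∉ s) : osc F k = 0 := by
  have h :
      {d : ℝ | ∃ ξ η : Config, (∀ j, j ≠ k → ξ j = η j) ∧ d = F ξ - F η} = {0} := by
    ext d
    constructor
    · rintro ⟨ξ, η, h, rfl⟩
      simp [hF.eq_of_eqOn_compl_singleton hk h]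
    · rintro rfl
      exact ⟨fun _ => true, fun _ => true, fun _ _ => rfl, (sub_self _).symm⟩
  rw [osc, h, csSup_singleton]

theorem DependsOn.oscSq_eq_sum {S : Finset ℤ} (hF : DependsOn F S) :
    oscSq F = ∑ k ∈ S, osc F k ^ 2 :=
  tsum_eq_sum fun k hk => by rw [hF.osc_eq_zero hk, sq, mul_zero]

theorem DependsOn.tsum_sq_sub_flipAt_eq_sum {S : Finset ℤ} (hF : DependsOn F S) (ω : Config) :
    ∑' i, (F ω - F (flipAt i ω)) ^ 2 = ∑ i ∈ S, (F ω - F (flipAt i ω)) ^ 2 :=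
  tsum_eq_sum fun i hi => by rw [hF.comp_flipAt hi, sub_self, sq, mul_zero]

end DependsOn

theorem entropy_exp (μ : Measure Config) (h : Config → ℝ) :
    entropy μ (fun ω => exp (h ω)) = (∫ ω, h ω * exp (h ω) ∂μ)
      - (∫ ω, exp (h ω) ∂μ) * log (∫ ω, exp (h ω) ∂μ) := by
  simp only [entropy, log_exp, mul_comm (exp _)]

theorem integral_sq_exp_half_sub_flipAt_le (μ : Measure Config) [IsFiniteMeasure μ] {i : ℤ}
    (hac : μ.map (flipAt i) ≪ μ) {M : ℝ} (hM : 0 ≤ M)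
    (hdens : ∀ᵐ ω ∂μ, (μ.map (flipAt i)).rnDeriv μ ω ≤ ENNReal.ofReal M)
    {h : Config → ℝ} (hh : Continuous h) {c : ℝ}
    (hc : ∀ ω, (h ω - h (flipAt i ω)) ^ 2 ≤ c) :
    ∫ ω, (exp (h ω / 2) - exp (h (flipAt i ω) / 2)) ^ 2 ∂μ
      ≤ c / 4 * ((M + 1) * ∫ ω, exp (h ω) ∂μ) := by
  have hexp : Continuous fun ω => exp (h ω) := by fun_prop
  have hexp_flip : Continuous fun ω => exp (h (flipAt i ω)) := by fun_prop
  have hpoint : ∀ ω, (exp (h ω / 2) - exp (h (flipAt i ω) / 2)) ^ 2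
      ≤ c / 4 * (exp (h ω) + exp (h (flipAt i ω))) := fun ω =>
    (sq_exp_half_sub_exp_half_le _ _).trans (by gcongr; exact hc ω)
  have hflip : ∫ ω, exp (h (flipAt i ω)) ∂μ ≤ M * ∫ ω, exp (h ω) ∂μ :=
    integral_comp_le_mul_integral_of_rnDeriv_le (continuous_flipAt i).measurable hac hM hdens
      hexp.stronglyMeasurable (fun ω => (exp_pos _).le) hexp.integrable_of_compactSpace
  have hc0 : 0 ≤ c := (sq_nonneg _).trans (hc fun _ => true)
  calc ∫ ω, (exp (h ω / 2) - exp (h (flipAt i ω) / 2)) ^ 2 ∂μ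
      ≤ ∫ ω, c / 4 * (exp (h ω) + exp (h (flipAt i ω))) ∂μ :=
        integral_mono_of_nonneg (.of_forall fun _ => sq_nonneg _)
          ((hexp.add hexp_flip).integrable_of_compactSpace.const_mul _) (.of_forall hpoint)
    _ = c / 4 * ((∫ ω, exp (h ω) ∂μ) + ∫ ω, exp (h (flipAt i ω)) ∂μ) := by
        rw [integral_const_mul, integral_add hexp.integrable_of_compactSpace
          hexp_flip.integrable_of_compactSpace]
    _ ≤ c / 4 * ((M + 1) * ∫ ω, exp (h ω) ∂μ) := by gcongr; linarith

/-- If `μ` satisfies the log-Sobolev inequality with constant `D > 0`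
and each spin-flip pushforward has density bounded by `M`, then for every local
continuous `f` and every `λ ∈ [0,1]` the Herbst differential inequality holds with
constant `(D(M+1)/2)·‖δ(f)‖₂²`. -/
theorem statement12 (μ : Measure Config) [IsProbabilityMeasure μ]
    (D : ℝ) (hD : 0 < D) (hLSI : SatisfiesLSI μ D)
    (M : ℝ) (hM : 0 < M)
    (hflip : ∀ i : ℤ, μ.map (flipAt i) ≪ μ ∧
      ∀ᵐ ω ∂μ, (μ.map (flipAt i)).rnDeriv μ ω ≤ ENNReal.ofReal M) :
    ∀ f : Config → ℝ, IsLocal f → Continuous f →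
      ∀ lam ∈ Set.Icc (0 : ℝ) 1,
        lam * (∫ ω, f ω * exp (lam * f ω) ∂μ)
          - (∫ ω, exp (lam * f ω) ∂μ) * log (∫ ω, exp (lam * f ω) ∂μ)
        ≤ (D * (M + 1) / 2) * oscSq f * lam ^ 2 * ∫ ω, exp (lam * f ω) ∂μ := by
  intro f hloc hf lam _
  obtain ⟨S, hfS⟩ : ∃ S : Finset ℤ, DependsOn f S := hloc.imp fun S hS ω η h => hS ω η h
  set I := ∫ ω, exp (lam * f ω) ∂μ
  set g : Config → ℝ := fun ω => exp (lam * f ω / 2)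
  have hgS : DependsOn g S := fun ω η h => by simp only [g, hfS h]
  have hLSI_g := hLSI g ⟨S, fun ω η h => hgS h⟩ (by fun_prop)
  have hg_sq : (fun ω => g ω ^ 2) = fun ω => exp (lam * f ω) := by
    funext ω; rw [← exp_nat_mul]; ring_nf
  rw [hg_sq, entropy_exp] at hLSI_g
  simp only [mul_assoc lam, integral_const_mul] at hLSI_g
  refine hLSI_g.trans ?_
  have hsite : ∀ i,
      ∫ ω, (g ω - g (flipAt i ω)) ^ 2 ∂μ ≤ lam ^ 2 * osc f i ^ 2 / 4 * ((M + 1) * I) :=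
    fun i => integral_sq_exp_half_sub_flipAt_le μ (hflip i).1 hM.le (hflip i).2 (by fun_prop)
      fun ω => by
        rw [← mul_sub, mul_pow, ← sq_abs (f ω - _)]
        gcongr
        exact abs_sub_flipAt_le_osc hf i ω
  calc 2 * D * ∫ ω, ∑' i, (g ω - g (flipAt i ω)) ^ 2 ∂μ
      = 2 * D * ∑ i ∈ S, ∫ ω, (g ω - g (flipAt i ω)) ^ 2 ∂μ := by
        simp only [hgS.tsum_sq_sub_flipAt_eq_sum]
        rw [integral_finsetSum _ fun i _ => Continuous.integrable_of_compactSpace (by fun_prop)]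
    _ ≤ 2 * D * ∑ i ∈ S, lam ^ 2 * osc f i ^ 2 / 4 * ((M + 1) * I) := by
        gcongr with i; exact hsite i
    _ = D * (M + 1) / 2 * oscSq f * lam ^ 2 * I := by
        simp only [hfS.oscSq_eq_sum, Finset.mul_sum, Finset.sum_mul]
        exact Finset.sum_congr rfl fun i _ => by ring

end
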